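/- Let G be a connected half-transitive multigraph with bipartition V₁ ∪ V₂, where every vertex of V₁ has degree d₁ and every vertex of V₂ has degree d₂. Then G is not maximally edge-connected (λ(G) < min{d₁,d₂}) if and only if there exists a proper induced connected half-transitive sub-multigraph H of G with |A₁|(d₁−d₁') + |A₂|(d₂−d₂') ≤ min{d₁,d₂} − 1, where A₁ = V₁ ∩ V(H), A₂ = V₂ ∩ V(H), and d₁', d₂' are the common degrees in H of vertices of A₁, A₂ respectively. -/

import Mathlib

/-- A multigraph: multiple edges allowed (recorded as edge multiplicities), no loops. -/
structure Multigraph (V : Type*) where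
  mult : V → V → ℕ
  symm : ∀ u v, mult u v = mult v u
  loopless : ∀ v, mult v v = 0

namespace Multigraph

variable {V : Type*}

/-- Adjacency: at least one edge between `u` and `v`. -/
def Adj (G : Multigraph V) (u v : V) : Prop := 0 < G.mult u v

instance (G : Multigraph V) (v : V) : DecidablePred (G.Adj v) :=
  fun u => inferInstanceAs (Decidable (0 < G.mult v u))

/-- Reachability by walks. -/
def Reachable (G : Multigraph V) : V → V → Prop := Relation.ReflTransGen G.Adj

/-- A multigraph is connected if it is nonempty and every two vertices are joined by a walk. -/
def Connected (G : Multigraph V) : Prop := Nonempty V ∧ ∀ u v, G.Reachable u v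

/-- An automorphism of a multigraph: a permutation preserving all edge multiplicities. -/
def Aut (G : Multigraph V) : Type _ :=
  {e : Equiv.Perm V // ∀ u v, G.mult (e u) (e v) = G.mult u v}

/-- A set of edges of `G`, given by sub-multiplicities. -/
structure EdgeSub (G : Multigraph V) where
  f : V → V → ℕ
  symm : ∀ u v, f u v = f v u
  le : ∀ u v, f u v ≤ G.mult u v

/-- The multigraph obtained by deleting the edge set `F`. -/
def deleteEdges (G : Multigraph V) (F : G.EdgeSub) : Multigraph V where
  mult u v := G.mult u v - F.f u v
  symm u v := by (try dsimp only); rw [G.symm u v, F.symm u v]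
  loopless v := by simp [G.loopless v]

/-- `F` is an edge-cut if removing it disconnects `G`. -/
def IsEdgeCut (G : Multigraph V) (F : G.EdgeSub) : Prop := ¬ (G.deleteEdges F).Connected

/-- `F` is a restricted edge-cut if removing it disconnects `G` and leaves no isolated vertex. -/
def IsRestrictedEdgeCut (G : Multigraph V) (F : G.EdgeSub) : Prop :=
  G.IsEdgeCut F ∧ ∀ v, ∃ u, (G.deleteEdges F).Adj v u

/-- `G` is bipartite with parts `V₁`, `V₂`. -/
def IsBipartition [DecidableEq V] [Fintype V] (G : Multigraph V) (V₁ V₂ : Finset V) : Prop :=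
  Disjoint V₁ V₂ ∧ V₁ ∪ V₂ = Finset.univ ∧ ∀ u v, G.Adj u v → (u ∈ V₁ ↔ v ∈ V₂)

/-- A bipartite multigraph is half-transitive if `Aut G` is transitive on each part. -/
def IsHalfTransitive [DecidableEq V] [Fintype V] (G : Multigraph V) (V₁ V₂ : Finset V) : Prop :=
  G.IsBipartition V₁ V₂ ∧
  (∀ u ∈ V₁, ∀ v ∈ V₁, ∃ e : G.Aut, e.1 u = v) ∧
  (∀ u ∈ V₂, ∀ v ∈ V₂, ∃ e : G.Aut, e.1 u = v)

/-- An imprimitive block for `Aut G`. -/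
def IsImprimitiveBlock [DecidableEq V] (G : Multigraph V) (A : Finset V) [Fintype V] : Prop :=
  A.Nonempty ∧ A ≠ Finset.univ ∧
  ∀ e : G.Aut, A.image e.1 = A ∨ Disjoint (A.image e.1) A

/-- The induced sub-multigraph on a vertex set `S`. -/
def induce (G : Multigraph V) (S : Finset V) : Multigraph {x // x ∈ S} where
  mult a b := G.mult a.1 b.1
  symm a b := G.symm a.1 b.1
  loopless a := G.loopless a.1

section Fin

variable [Fintype V] [DecidableEq V]

/-- The degree of a vertex (counting multiplicities). -/
def degree (G : Multigraph V) (v : V) : ℕ := ∑ u, G.mult v u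

/-- The minimum degree `δ(G)`. -/
noncomputable def minDegree (G : Multigraph V) : ℕ := sInf {n | ∃ v, G.degree v = n}

/-- The maximum edge multiplicity `μ(G)`. -/
def maxMult (G : Multigraph V) : ℕ := Finset.univ.sup fun p : V × V => G.mult p.1 p.2

/-- `d(A)`: the number of edges between `A` and its complement. -/
def cut (G : Multigraph V) (A : Finset V) : ℕ := ∑ u ∈ A, ∑ v ∈ Aᶜ, G.mult u v

/-- The number of edges in an edge set. -/
def EdgeSub.card {G : Multigraph V} (F : G.EdgeSub) : ℕ := (∑ u, ∑ v, F.f u v) / 2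

/-- The edge-boundary `N(A)` of a vertex set `A`, as an edge set. -/
def boundary (G : Multigraph V) (A : Finset V) : G.EdgeSub where
  f u v := if (u ∈ A ∧ v ∉ A) ∨ (v ∈ A ∧ u ∉ A) then G.mult u v else 0
  symm u v := by
    try dsimp only
    by_cases h1 : u ∈ A <;> by_cases h2 : v ∈ A <;> simp [h1, h2, G.symm u v]
  le u v := by (try dsimp only); split_ifs <;> simp

/-- The edge-connectivity `λ(G)`. -/
noncomputable def edgeConn (G : Multigraph V) : ℕ :=
  sInf {n | ∃ F : G.EdgeSub, G.IsEdgeCut F ∧ F.card = n}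

/-- The restricted edge-connectivity `λ'(G)`. -/
noncomputable def rEdgeConn (G : Multigraph V) : ℕ :=
  sInf {n | ∃ F : G.EdgeSub, G.IsRestrictedEdgeCut F ∧ F.card = n}

/-- The minimum edge degree `ξ(G) = min {d(u)+d(v)-2μ(uv) : uv ∈ E}`. -/
noncomputable def minEdgeDegree (G : Multigraph V) : ℕ :=
  sInf {n | ∃ u v, G.Adj u v ∧ n = G.degree u + G.degree v - 2 * G.mult u v}

/-- A `λ`-fragment: a vertex set whose edge-boundary is a minimum edge-cut. -/
def IsFragment (G : Multigraph V) (A : Finset V) : Prop :=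
  A.Nonempty ∧ Aᶜ.Nonempty ∧ G.IsEdgeCut (G.boundary A) ∧ G.cut A = G.edgeConn

/-- A `λ`-atom: a `λ`-fragment of minimum cardinality. -/
def IsAtom (G : Multigraph V) (A : Finset V) : Prop :=
  G.IsFragment A ∧ ∀ B : Finset V, G.IsFragment B → A.card ≤ B.card

/-- A strict `λ`-fragment: a `λ`-fragment `C` with `2 ≤ |C| ≤ |V| - 2`. -/
def IsStrictFragment (G : Multigraph V) (A : Finset V) : Prop :=
  G.IsFragment A ∧ 2 ≤ A.card ∧ A.card ≤ Fintype.card V - 2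

/-- A `λ`-superatom: a strict `λ`-fragment of minimum cardinality. -/
def IsSuperAtom (G : Multigraph V) (A : Finset V) : Prop :=
  G.IsStrictFragment A ∧ ∀ B : Finset V, G.IsStrictFragment B → A.card ≤ B.card

/-- A `λ'`-fragment: a vertex set whose edge-boundary is a minimum restricted edge-cut. -/
def IsRFragment (G : Multigraph V) (A : Finset V) : Prop :=
  G.IsRestrictedEdgeCut (G.boundary A) ∧ G.cut A = G.rEdgeConn

/-- A `λ'`-atom: a `λ'`-fragment of minimum cardinality. -/
def IsRAtom (G : Multigraph V) (A : Finset V) : Prop :=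
  G.IsRFragment A ∧ ∀ B : Finset V, G.IsRFragment B → A.card ≤ B.card

/-- `G` is super edge-connected if every minimum edge-cut is the set of all edges
incident with some vertex. -/
def IsSuperEdgeConnected (G : Multigraph V) : Prop :=
  ∀ F : G.EdgeSub, G.IsEdgeCut F → F.card = G.edgeConn →
    ∃ v : V, ∀ u w : V, F.f u w = if u = v ∨ w = v then G.mult u w else 0

end Fin

end Multigraph

/-!
If `λ(G) < min d₁ d₂`, let `A` be a `λ`-atom. Submodularity of the cut function shows that an
atom meeting its image under an automorphism equals it, so `A` is a block of `Aut G`: every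
automorphism carrying a vertex of `A` into `A` restricts to `G[A]`, which is therefore
half-transitive, with constant degrees `d₁'`, `d₂'` on its two parts; it is connected because a
component of `G[A]` would be a smaller fragment. Counting the edges leaving `A` vertex by vertex
gives `λ(G) = d(A) = |A₁|(d₁ - d₁') + |A₂|(d₂ - d₂')`. Conversely, the same count for any `H` as
in the statement gives `λ(G) ≤ d(V(H)) ≤ min d₁ d₂ - 1`.
-/

namespace Multigraph

open Finset

section Automorphisms

variable {V : Type*} {G : Multigraph V}

def Aut.restrict (e : G.Aut) (S : Finset V) (h : ∀ v, e.1 v ∈ S ↔ v ∈ S) :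
    (G.induce S).Aut :=
  ⟨e.1.subtypePerm h, fun u v => e.2 u v⟩

variable [Fintype V]

lemma Aut.degree_apply (e : G.Aut) (v : V) : G.degree (e.1 v) = G.degree v := by
  unfold degree
  rw [← Equiv.sum_comp e.1]
  exact sum_congr rfl fun u _ => e.2 v u

lemma exists_degree_eq_of_transitive {W : Finset V}
    (h : ∀ u ∈ W, ∀ v ∈ W, ∃ e : G.Aut, e.1 u = v) : ∃ d, ∀ v ∈ W, G.degree v = d := by
  rcases W.eq_empty_or_nonempty with rfl | ⟨w, hw⟩
  · exact ⟨0, by simp⟩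
  · refine ⟨G.degree w, fun v hv => ?_⟩
    obtain ⟨e, rfl⟩ := h w hw v hv
    exact e.degree_apply w

lemma EdgeSub.card_mono {F F' : G.EdgeSub} (h : ∀ u v, F.f u v ≤ F'.f u v) :
    F.card ≤ F'.card :=
  Nat.div_le_div_right (sum_le_sum fun u _ => sum_le_sum fun v _ => h u v)

variable [DecidableEq V]

lemma IsImprimitiveBlock.apply_mem_iff {A : Finset V} (hA : G.IsImprimitiveBlock A)
    (e : G.Aut) {u : V} (hu : u ∈ A) (heu : e.1 u ∈ A) (v : V) : e.1 v ∈ A ↔ v ∈ A := by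
  have himage : A.image e.1 = A := (hA.2.2 e).resolve_right fun hdisj =>
    disjoint_left.mp hdisj (mem_image_of_mem e.1 hu) heu
  have := e.1.injective.mem_finset_image (s := A) (a := v)
  rwa [himage] at this

lemma IsBipartition.induce {V₁ V₂ : Finset V} (h : G.IsBipartition V₁ V₂) (S : Finset V) :
    (G.induce S).IsBipartition (univ.filter fun x : {x // x ∈ S} => x.1 ∈ V₁)
      (univ.filter fun x : {x // x ∈ S} => x.1 ∈ V₂) := by
  obtain ⟨hdisj, huniv, hadj⟩ := h
  refine ⟨disjoint_filter.mpr fun x _ h₁ h₂ => disjoint_left.mp hdisj h₁ h₂, ?_,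
    fun x y hxy => by simpa using hadj x y hxy⟩
  ext x
  simpa using (huniv ▸ mem_univ x.1 : x.1 ∈ V₁ ∪ V₂)

lemma IsHalfTransitive.induce_of_isImprimitiveBlock {V₁ V₂ A : Finset V}
    (h : G.IsHalfTransitive V₁ V₂) (hA : G.IsImprimitiveBlock A) :
    (G.induce A).IsHalfTransitive (univ.filter fun x : {x // x ∈ A} => x.1 ∈ V₁)
      (univ.filter fun x : {x // x ∈ A} => x.1 ∈ V₂) := by
  obtain ⟨hbip, htr₁, htr₂⟩ := h
  have restrict (x y : {x // x ∈ A}) (hxy : ∃ e : G.Aut, e.1 x = y) :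
      ∃ σ : (G.induce A).Aut, σ.1 x = y := by
    obtain ⟨e, he⟩ := hxy
    exact ⟨e.restrict A (hA.apply_mem_iff e x.2 (he ▸ y.2)), Subtype.ext he⟩
  refine ⟨hbip.induce A, fun x hx y hy => restrict x y ?_, fun x hx y hy => restrict x y ?_⟩
  · simp only [mem_filter, mem_univ, true_and] at hx hy
    exact htr₁ x hx y hy
  · simp only [mem_filter, mem_univ, true_and] at hx hy
    exact htr₂ x hx y hy

end Automorphisms

section Cuts

variable {V : Type*} [Fintype V] [DecidableEq V] (G : Multigraph V)

lemma cut_eq_sum_ite (A : Finset V) :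
    G.cut A = ∑ u, ∑ v, if u ∈ A ∧ v ∉ A then G.mult u v else 0 := by
  rw [cut, ← sum_product', ← sum_product', ← sum_filter]
  congr 1
  ext ⟨u, v⟩
  simp

lemma cut_compl (A : Finset V) : G.cut Aᶜ = G.cut A := by
  rw [cut, cut, compl_compl, sum_comm]
  exact sum_congr rfl fun u _ => sum_congr rfl fun v _ => G.symm v u

lemma cut_submodular (A B : Finset V) :
    G.cut (A ∩ B) + G.cut (A ∪ B) ≤ G.cut A + G.cut B := by
  simp only [cut_eq_sum_ite, ← sum_add_distrib]
  refine sum_le_sum fun u _ => sum_le_sum fun v _ => ?_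
  by_cases h₁ : u ∈ A <;> by_cases h₂ : u ∈ B <;> by_cases h₃ : v ∈ A <;> by_cases h₄ : v ∈ B <;>
    simp [h₁, h₂, h₃, h₄]

lemma cut_le_cut_of_subset {A B : Finset V} (hBA : B ⊆ A)
    (hB : ∀ u ∈ B, ∀ v ∈ A \ B, G.mult u v = 0) : G.cut B ≤ G.cut A := by
  simp only [cut_eq_sum_ite]
  refine sum_le_sum fun u _ => sum_le_sum fun v _ => ?_
  split_ifs with huv hA
  · exact le_rfl
  · have hvA : v ∈ A := by by_contra hvA; exact hA ⟨hBA huv.1, hvA⟩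
    exact (hB u huv.1 v (mem_sdiff.mpr ⟨hvA, huv.2⟩)).le
  all_goals exact Nat.zero_le _

lemma cut_image (e : G.Aut) (A : Finset V) : G.cut (A.image e.1) = G.cut A := by
  simp only [cut_eq_sum_ite]
  rw [← Equiv.sum_comp e.1]
  refine sum_congr rfl fun u _ => ?_
  rw [← Equiv.sum_comp e.1]
  simp only [e.1.injective.mem_finset_image, e.2]

lemma boundary_card (A : Finset V) : (G.boundary A).card = G.cut A := by
  have hsplit (u v : V) : (G.boundary A).f u v =
      (if u ∈ A ∧ v ∉ A then G.mult u v else 0) + (if v ∈ A ∧ u ∉ A then G.mult v u else 0) := by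
    by_cases hu : u ∈ A <;> by_cases hv : v ∈ A <;> simp [boundary, hu, hv, G.symm u v]
  have htotal : ∑ u, ∑ v, (G.boundary A).f u v = 2 * G.cut A := by
    simp only [hsplit, sum_add_distrib]
    rw [sum_comm (f := fun u v => if v ∈ A ∧ u ∉ A then G.mult v u else 0), ← cut_eq_sum_ite]
    ring
  rw [EdgeSub.card, htotal, Nat.mul_div_cancel_left _ two_pos]

lemma cut_le_card {A : Finset V} {F : G.EdgeSub}
    (hF : ∀ u ∈ A, ∀ v ∉ A, F.f u v = G.mult u v) : G.cut A ≤ F.card := by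
  rw [← boundary_card]
  refine EdgeSub.card_mono fun u v => ?_
  simp only [boundary]
  split_ifs with h
  · rcases h with ⟨hu, hv⟩ | ⟨hv, hu⟩
    · exact (hF u hu v hv).ge
    · rw [F.symm, G.symm]
      exact (hF v hv u hu).ge
  · exact Nat.zero_le _

end Cuts

lemma mem_of_reachable_deleteEdges_boundary {V : Type*} [DecidableEq V] (G : Multigraph V)
    {A : Finset V} {a b : V}
    (h : (G.deleteEdges (G.boundary A)).Reachable a b) (ha : a ∈ A) : b ∈ A := by
  induction h with
  | refl => exact ha
  | @tail c d _ hcd hc =>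
    by_contra hd
    have hcut : (G.boundary A).f c d = G.mult c d := if_pos (Or.inl ⟨hc, hd⟩)
    exact (Nat.sub_eq_zero_of_le hcut.ge).not_gt hcd

section Fragments

variable {V : Type*} [Fintype V] [DecidableEq V] (G : Multigraph V)

lemma boundary_isEdgeCut {A : Finset V} (hA : A.Nonempty) (hAc : Aᶜ.Nonempty) :
    G.IsEdgeCut (G.boundary A) := by
  obtain ⟨a, ha⟩ := hA
  obtain ⟨b, hb⟩ := hAc
  rintro ⟨-, hreach⟩
  exact mem_compl.mp hb (G.mem_of_reachable_deleteEdges_boundary (hreach a b) ha)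

lemma edgeConn_le_cut {A : Finset V} (hA : A.Nonempty) (hAc : Aᶜ.Nonempty) :
    G.edgeConn ≤ G.cut A :=
  Nat.sInf_le ⟨G.boundary A, G.boundary_isEdgeCut hA hAc, G.boundary_card A⟩

lemma exists_cut_le_card [Nonempty V] {F : G.EdgeSub} (hF : G.IsEdgeCut F) :
    ∃ A : Finset V, A.Nonempty ∧ Aᶜ.Nonempty ∧ G.cut A ≤ F.card := by
  classical
  obtain ⟨a, b, hab⟩ : ∃ a b, ¬ (G.deleteEdges F).Reachable a b := by
    simpa [IsEdgeCut, Connected] using hF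
  set A := univ.filter ((G.deleteEdges F).Reachable a)
  refine ⟨A, ⟨a, mem_filter.mpr ⟨mem_univ a, .refl⟩⟩, ⟨b, by simpa [A] using hab⟩,
    G.cut_le_card fun u hu v hv => ?_⟩
  -- an edge of `G - F` leaving the component `A` of `a` would extend it
  by_contra hne
  have hadj : (G.deleteEdges F).Adj u v := Nat.sub_pos_of_lt ((F.le u v).lt_of_ne hne)
  simp only [A, mem_filter, mem_univ, true_and] at hu hv
  exact hv (hu.tail hadj)

lemma isFragment_of_cut_le {A : Finset V} (hA : A.Nonempty) (hAc : Aᶜ.Nonempty)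
    (hcut : G.cut A ≤ G.edgeConn) : G.IsFragment A :=
  ⟨hA, hAc, G.boundary_isEdgeCut hA hAc, hcut.antisymm (G.edgeConn_le_cut hA hAc)⟩

variable {G}

lemma IsFragment.compl {A : Finset V} (h : G.IsFragment A) : G.IsFragment Aᶜ :=
  G.isFragment_of_cut_le h.2.1 (by rw [compl_compl]; exact h.1) (by rw [cut_compl, h.2.2.2])

lemma IsFragment.image {A : Finset V} (h : G.IsFragment A) (e : G.Aut) :
    G.IsFragment (A.image e.1) := by
  refine G.isFragment_of_cut_le (h.1.image e.1) ?_ (by rw [cut_image, h.2.2.2])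
  obtain ⟨v, hv⟩ := h.2.1
  exact ⟨e.1 v, by simpa [e.1.injective.mem_finset_image] using hv⟩

variable (G)

lemma exists_isFragment [Nontrivial V] : ∃ A, G.IsFragment A := by
  obtain ⟨u, v, huv⟩ := exists_pair_ne V
  have hcuts : {n | ∃ F : G.EdgeSub, G.IsEdgeCut F ∧ F.card = n}.Nonempty :=
    ⟨_, G.boundary {v}, G.boundary_isEdgeCut (singleton_nonempty v) ⟨u, by simpa using huv⟩, rfl⟩
  obtain ⟨F, hF, hFcard⟩ := Nat.sInf_mem hcuts
  obtain ⟨A, hA, hAc, hcut⟩ := G.exists_cut_le_card hF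
  exact ⟨A, G.isFragment_of_cut_le hA hAc (hcut.trans hFcard.le)⟩

lemma exists_isAtom [Nontrivial V] : ∃ A, G.IsAtom A := by
  classical
  obtain ⟨A₀, hA₀⟩ := G.exists_isFragment
  obtain ⟨A, hA, hmin⟩ :=
    (univ.filter G.IsFragment).exists_min_image card ⟨A₀, by simpa using hA₀⟩
  exact ⟨A, by simpa using hA, fun B hB => hmin B (by simpa using hB)⟩

variable {G}

lemma IsAtom.eq_of_inter_nonempty {A B : Finset V} (hA : G.IsAtom A) (hB : G.IsFragment B)
    (hcard : B.card = A.card) (hAB : (A ∩ B).Nonempty) : A = B := by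
  have hAc : A.card ≤ Aᶜ.card := hA.2 Aᶜ hA.1.compl
  have hunion : (A ∪ B)ᶜ.Nonempty := by
    rw [← card_pos, card_compl]
    have := card_union_add_card_inter A B
    have := card_pos.mpr hAB
    rw [card_compl] at hAc
    omega
  have hinter : (A ∩ B)ᶜ.Nonempty := hA.1.2.1.mono (compl_subset_compl.mpr inter_subset_left)
  -- submodularity forces `A ∩ B` to be a fragment as well
  have hfrag : G.IsFragment (A ∩ B) := by
    refine G.isFragment_of_cut_le hAB hinter ?_
    have hsub := G.cut_submodular A B
    have hcut_union := G.edgeConn_le_cut (hA.1.1.mono subset_union_left) hunion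
    rw [hA.1.2.2.2, hB.2.2.2] at hsub
    omega
  have hle := hA.2 _ hfrag
  rw [← eq_of_subset_of_card_le inter_subset_left hle,
    eq_of_subset_of_card_le inter_subset_right (hcard ▸ hle)]

lemma IsAtom.isImprimitiveBlock {A : Finset V} (hA : G.IsAtom A) : G.IsImprimitiveBlock A := by
  refine ⟨hA.1.1, fun h => ?_, fun e => ?_⟩
  · obtain ⟨v, hv⟩ := hA.1.2.1
    exact notMem_compl.mpr (h ▸ mem_univ v) hv
  · rw [or_iff_not_imp_right, not_disjoint_iff_nonempty_inter]
    intro hne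
    exact (hA.eq_of_inter_nonempty (hA.1.image e) (card_image_of_injective A e.1.injective)
      (inter_comm A _ ▸ hne)).symm

lemma IsAtom.induce_connected {A : Finset V} (hA : G.IsAtom A) : (G.induce A).Connected := by
  classical
  obtain ⟨x, hx⟩ := hA.1.1
  refine ⟨⟨⟨x, hx⟩⟩, fun y z => ?_⟩
  by_contra hyz
  -- the component `B` of `y` in `G[A]` would be a smaller fragment
  set B := univ.filter fun b => ∃ hb : b ∈ A, (G.induce A).Reachable y ⟨b, hb⟩
  have hBA : B ⊆ A := fun b hb => (mem_filter.mp hb).2.1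
  have hyB : y.1 ∈ B := mem_filter.mpr ⟨mem_univ _, y.2, .refl⟩
  have hzB : z.1 ∉ B := by simpa [B] using hyz
  have hclosed : ∀ u ∈ B, ∀ v ∈ A \ B, G.mult u v = 0 := by
    intro u hu v hv
    simp only [B, mem_sdiff, mem_filter, mem_univ, true_and] at hu hv
    obtain ⟨hu, hyu⟩ := hu
    by_contra hne
    exact hv.2 ⟨hv.1, hyu.tail (Nat.pos_of_ne_zero hne)⟩
  have hB : G.IsFragment B := G.isFragment_of_cut_le ⟨y, hyB⟩ ⟨z, mem_compl.mpr hzB⟩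
    ((G.cut_le_cut_of_subset hBA hclosed).trans hA.1.2.2.2.le)
  exact (card_lt_card (ssubset_iff_of_subset hBA |>.mpr ⟨z, z.2, hzB⟩)).not_ge (hA.2 B hB)

end Fragments

lemma Connected.exists_adj {V : Type*} {G : Multigraph V} (hG : G.Connected) {u v : V}
    (huv : u ≠ v) : ∃ w, G.Adj u w := by
  rcases (hG.2 u v).cases_head with h | ⟨w, hw, -⟩
  · exact absurd h huv
  · exact ⟨w, hw⟩

section Degrees

variable {V : Type*} (G : Multigraph V)

lemma degree_induce (S : Finset V) {u : V} (hu : u ∈ S) :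
    (G.induce S).degree ⟨u, hu⟩ = ∑ v ∈ S, G.mult u v := by
  unfold degree induce
  rw [← sum_attach S]
  rfl

variable [Fintype V]

lemma mult_le_degree (u v : V) : G.mult u v ≤ G.degree u :=
  single_le_sum (f := G.mult u) (fun _ _ => Nat.zero_le _) (mem_univ v)

lemma nontrivial_of_degree_pos {v : V} (h : 0 < G.degree v) : Nontrivial V := by
  obtain ⟨u, -, hu⟩ := exists_ne_zero_of_sum_ne_zero h.ne'
  exact ⟨⟨v, u, fun hvu => hu (hvu ▸ G.loopless v)⟩⟩

variable [DecidableEq V] {V₁ V₂ : Finset V} {d₁ d₂ : ℕ}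

lemma cut_eq_sum_degree_sub (A : Finset V) :
    G.cut A = ∑ u ∈ A, (G.degree u - ∑ v ∈ A, G.mult u v) := by
  refine sum_congr rfl fun u _ => ?_
  have := sum_add_sum_compl A (G.mult u)
  rw [degree, ← this]
  omega

lemma min_le_degree (huniv : V₁ ∪ V₂ = univ) (hd₁ : ∀ v ∈ V₁, G.degree v = d₁)
    (hd₂ : ∀ v ∈ V₂, G.degree v = d₂) (v : V) : min d₁ d₂ ≤ G.degree v := by
  rcases mem_union.mp (huniv ▸ mem_univ v) with hv | hv
  · exact (hd₁ v hv).ge.trans' (min_le_left _ _)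
  · exact (hd₂ v hv).ge.trans' (min_le_right _ _)

lemma cut_eq_of_degree_induce_eq (hdisj : Disjoint V₁ V₂) (huniv : V₁ ∪ V₂ = univ)
    (hd₁ : ∀ v ∈ V₁, G.degree v = d₁) (hd₂ : ∀ v ∈ V₂, G.degree v = d₂) {A : Finset V}
    {d₁' d₂' : ℕ} (hd₁' : ∀ x : {x // x ∈ A}, x.1 ∈ V₁ → (G.induce A).degree x = d₁')
    (hd₂' : ∀ x : {x // x ∈ A}, x.1 ∈ V₂ → (G.induce A).degree x = d₂') :
    G.cut A = (V₁ ∩ A).card * (d₁ - d₁') + (V₂ ∩ A).card * (d₂ - d₂') := by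
  have hsplit : A = (V₁ ∩ A) ∪ (V₂ ∩ A) := by
    rw [← union_inter_distrib_right, huniv, univ_inter]
  have hterm {W : Finset V} {d d' : ℕ} (hd : ∀ v ∈ W, G.degree v = d)
      (hd' : ∀ x : {x // x ∈ A}, x.1 ∈ W → (G.induce A).degree x = d') :
      ∑ u ∈ W ∩ A, (G.degree u - ∑ v ∈ A, G.mult u v) = (W ∩ A).card * (d - d') :=
    sum_const_nat fun u hu => by
      obtain ⟨huW, huA⟩ := mem_inter.mp hu
      rw [hd u huW, ← G.degree_induce A huA, hd' ⟨u, huA⟩ huW]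
  rw [cut_eq_sum_degree_sub, hsplit, sum_union (hdisj.mono inter_subset_left inter_subset_left),
    ← hsplit, hterm hd₁ hd₁', hterm hd₂ hd₂']

variable {G}

lemma IsBipartition.min_pos_of_adj (h : G.IsBipartition V₁ V₂)
    (hd₁ : ∀ v ∈ V₁, G.degree v = d₁) (hd₂ : ∀ v ∈ V₂, G.degree v = d₂) {u v : V}
    (huv : G.Adj u v) : 0 < min d₁ d₂ := by
  obtain ⟨hdisj, huniv, hparts⟩ := h
  have hu : 0 < G.degree u := huv.trans_le (G.mult_le_degree u v)
  have hv : 0 < G.degree v :=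
    (show 0 < G.mult v u from G.symm u v ▸ huv).trans_le (G.mult_le_degree v u)
  rcases mem_union.mp (huniv ▸ mem_univ u) with hu₁ | hu₂
  · rw [← hd₁ u hu₁, ← hd₂ v ((hparts u v huv).mp hu₁)]
    exact lt_min hu hv
  · have hv₁ : v ∈ V₁ := by
      rcases mem_union.mp (huniv ▸ mem_univ v) with hv₁ | hv₂
      · exact hv₁
      · exact absurd ((hparts u v huv).mpr hv₂) (disjoint_right.mp hdisj hu₂)
    rw [← hd₁ v hv₁, ← hd₂ u hu₂]
    exact lt_min hv hu

end Degrees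

end Multigraph

variable {V : Type*} [Fintype V] [DecidableEq V]

open Multigraph

/-- A connected half-transitive multigraph is not maximally edge-connected iff it contains a
proper induced connected half-transitive sub-multigraph `H` with
`|A₁|(d₁-d₁') + |A₂|(d₂-d₂') ≤ min d₁ d₂ - 1`. -/
theorem not_maximallyEdgeConnected_iff (G : Multigraph V) (V₁ V₂ : Finset V) (d₁ d₂ : ℕ)
    (hG : G.Connected) (hht : G.IsHalfTransitive V₁ V₂)
    (hd1 : ∀ v ∈ V₁, G.degree v = d₁) (hd2 : ∀ v ∈ V₂, G.degree v = d₂) :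
    G.edgeConn < min d₁ d₂ ↔
    ∃ (S : Finset V) (d₁' d₂' : ℕ),
      S.Nonempty ∧ S ≠ Finset.univ ∧ (G.induce S).Connected ∧
      (G.induce S).IsHalfTransitive
        (Finset.univ.filter fun x : {x // x ∈ S} => x.1 ∈ V₁)
        (Finset.univ.filter fun x : {x // x ∈ S} => x.1 ∈ V₂) ∧
      (∀ x : {x // x ∈ S}, x.1 ∈ V₁ → (G.induce S).degree x = d₁') ∧
      (∀ x : {x // x ∈ S}, x.1 ∈ V₂ → (G.induce S).degree x = d₂') ∧
      (V₁ ∩ S).card * (d₁ - d₁') + (V₂ ∩ S).card * (d₂ - d₂') ≤ min d₁ d₂ - 1 := by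
  obtain ⟨hdisj, huniv, -⟩ := hht.1
  constructor
  · intro hlt
    obtain ⟨v⟩ := hG.1
    have : Nontrivial V :=
      G.nontrivial_of_degree_pos (Nat.zero_lt_of_lt (hlt.trans_le
        (G.min_le_degree huniv hd1 hd2 v)))
    obtain ⟨A, hA⟩ := G.exists_isAtom
    have hblock := hA.isImprimitiveBlock
    have hhtA := hht.induce_of_isImprimitiveBlock hblock
    obtain ⟨d₁', hd₁'⟩ := exists_degree_eq_of_transitive hhtA.2.1
    obtain ⟨d₂', hd₂'⟩ := exists_degree_eq_of_transitive hhtA.2.2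
    have hA₁ (x : {x // x ∈ A}) (hx : x.1 ∈ V₁) : (G.induce A).degree x = d₁' :=
      hd₁' x (by simpa using hx)
    have hA₂ (x : {x // x ∈ A}) (hx : x.1 ∈ V₂) : (G.induce A).degree x = d₂' :=
      hd₂' x (by simpa using hx)
    refine ⟨A, d₁', d₂', hblock.1, hblock.2.1, hA.induce_connected, hhtA, hA₁, hA₂, ?_⟩
    rw [← G.cut_eq_of_degree_induce_eq hdisj huniv hd1 hd2 hA₁ hA₂, hA.1.2.2.2]
    omega
  · rintro ⟨S, d₁', d₂', ⟨s, hs⟩, hS, -, -, hS₁, hS₂, hcut⟩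
    have hSc : Sᶜ.Nonempty := by rwa [Finset.nonempty_iff_ne_empty, Ne, Finset.compl_eq_empty_iff]
    obtain ⟨t, ht⟩ := hSc
    obtain ⟨w, hsw⟩ := hG.exists_adj (ne_of_mem_of_not_mem hs (Finset.mem_compl.mp ht))
    have hpos := hht.1.min_pos_of_adj hd1 hd2 hsw
    calc G.edgeConn ≤ G.cut S := G.edgeConn_le_cut ⟨s, hs⟩ ⟨t, ht⟩
      _ = (V₁ ∩ S).card * (d₁ - d₁') + (V₂ ∩ S).card * (d₂ - d₂') :=
        G.cut_eq_of_degree_induce_eq hdisj huniv hd1 hd2 hS₁ hS₂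
      _ < min d₁ d₂ := by omega
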